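/- arXiv:2112.13477 — 2 statements merged into one kernel-verified Lean document; each statement's English description precedes it below -/
import Mathlib

section
/- Any rule update operator satisfying the strong-equivalence replacement postulate PU4 (if P ≡_HT Q and U ≡_HT V then P ⊕ U ≡_HT Q ⊕ V) cannot respect both support and fact update. Concretely: with P = {p., q.}, Q = {p ← q., q.}, and U = {∼q.}, P and Q are strongly equivalent (have the same HT-models), so by PU4 the programs P ⊕ U and Q ⊕ U have the same stable models; if fact update holds then {p} is the unique stable model of P ⊕ U; but then {p} is a stable model of Q ⊕ U in which p is not supported by any rule of Q ∪ U, contradicting support. -/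
inductive Lit (α : Type) where
  | pos : α → Lit α
  | neg : α → Lit α

structure Rule (α : Type) where
  head : Set (Lit α)
  body : Set (Lit α)

def litSat {α : Type} (J : Set α) : Lit α → Prop
  | .pos a => a ∈ J
  | .neg a => a ∉ J

def ruleSat {α : Type} (J : Set α) (π : Rule α) : Prop :=
  (∃ L ∈ π.body, ¬ litSat J L) ∨ (∃ L ∈ π.head, litSat J L)

def progSat {α : Type} (J : Set α) (P : Set (Rule α)) : Prop :=
  ∀ π ∈ P, ruleSat J π

/-- A rule is kept in the reduct w.r.t. `J` iff `J` does not satisfy the rule `(∼H⁻, ∼B⁻)`. -/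
def kept {α : Type} (J : Set α) (π : Rule α) : Prop :=
  (∀ a : α, Lit.neg a ∈ π.body → a ∉ J) ∧ (∀ a : α, Lit.neg a ∈ π.head → a ∈ J)

/-- The positive-part rule `(H⁺, B⁺)`. -/
def reductRule {α : Type} (π : Rule α) : Rule α :=
  ⟨{L ∈ π.head | ∃ a, L = Lit.pos a}, {L ∈ π.body | ∃ a, L = Lit.pos a}⟩

def reduct {α : Type} (J : Set α) (P : Set (Rule α)) : Set (Rule α) :=
  {ρ | ∃ π ∈ P, kept J π ∧ ρ = reductRule π}

/-- `J` is a stable model of `P`: a subset-minimal classical model of the reduct `P^J`. -/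
def stableModel {α : Type} (P : Set (Rule α)) (J : Set α) : Prop :=
  progSat J (reduct J P) ∧ ∀ I : Set α, progSat I (reduct J P) → ¬ I ⊂ J

/-- `⟨I, J⟩` is an RE-model of rule `π` iff `I ⊨ π^J`. -/
def reRule {α : Type} (π : Rule α) (I J : Set α) : Prop :=
  kept J π → ruleSat I (reductRule π)

/-- `⟨I, J⟩` is an HT-model of rule `π` iff `J ⊨ π` and `I ⊨ π^J`. -/
def htRule {α : Type} (π : Rule α) (I J : Set α) : Prop :=
  ruleSat J π ∧ reRule π I J

def htProg {α : Type} (P : Set (Rule α)) (I J : Set α) : Prop :=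
  ∀ π ∈ P, htRule π I J

def reProg {α : Type} (P : Set (Rule α)) (I J : Set α) : Prop :=
  ∀ π ∈ P, reRule π I J

def negLit {α : Type} : Lit α → Lit α
  | .pos a => .neg a
  | .neg a => .pos a

/-- Rules `π`, `σ` are in conflict iff `head π ≠ ∅` and `head π = ∼ head σ`. -/
def conflict {α : Type} (π σ : Rule α) : Prop :=
  π.head ≠ ∅ ∧ π.head = negLit '' σ.head

def bodySat {α : Type} (J : Set α) (σ : Rule α) : Prop :=
  ∀ L ∈ σ.body, litSat J L

/-- Strong equivalence: same HT-models. -/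
def htEquiv {α : Type} (P Q : Set (Rule α)) : Prop :=
  ∀ I J : Set α, I ⊆ J → (htProg P I J ↔ htProg Q I J)

def fact {α : Type} (L : Lit α) : Rule α := ⟨{L}, ∅⟩

def isFactProg {α : Type} (F : Set (Rule α)) : Prop :=
  ∀ π ∈ F, ∃ L : Lit α, π = fact L

def consistentFacts {α : Type} (F : Set (Rule α)) : Prop :=
  ¬ ∃ a : α, fact (Lit.pos a) ∈ F ∧ fact (Lit.neg a) ∈ F

/-- PU4: replacement of strongly equivalent programs. -/
def satisfiesPU4 {α : Type} (op : Set (Rule α) → Set (Rule α) → Set (Rule α)) : Prop :=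
  ∀ P Q U V : Set (Rule α), htEquiv P Q → htEquiv U V → htEquiv (op P U) (op Q V)

/-- Support: every atom true in a stable model of the updated program is the head of some
rule of the combined program whose body is true in that model. -/
def respectsSupport {α : Type} (op : Set (Rule α) → Set (Rule α) → Set (Rule α)) : Prop :=
  ∀ (P U : Set (Rule α)) (J : Set α), stableModel (op P U) J →
    ∀ a ∈ J, ∃ π ∈ P ∪ U, Lit.pos a ∈ π.head ∧ bodySat J π

/-- Fact update: updating a consistent set of facts by a consistent set of facts yields the
unique model consisting of the atoms asserted at some stage and not subsequently contradicted. -/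
def respectsFactUpdate {α : Type} (op : Set (Rule α) → Set (Rule α) → Set (Rule α)) : Prop :=
  ∀ F₀ F₁ : Set (Rule α), isFactProg F₀ → isFactProg F₁ →
    consistentFacts F₀ → consistentFacts F₁ →
    ∀ J : Set α, stableModel (op F₀ F₁) J ↔
      J = {a | fact (Lit.pos a) ∈ F₁ ∨
            (fact (Lit.pos a) ∈ F₀ ∧ fact (Lit.neg a) ∉ F₁)}

/-!
Strongly equivalent programs have the same stable models, since `J` is stable for `P` exactly
when `⟨J, J⟩` is an HT-model of `P` and no `⟨I, J⟩` with `I ⊂ J` is. The programs `{p., q.}` and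
`{p ← q., q.}` both have as HT-models exactly the pairs `⟨I, J⟩` with `p, q ∈ I`, so PU4 transfers
the stable model `{p}` that fact update assigns to `{p., q.} ⊕ {∼q.}` to `{p ← q., q.} ⊕ {∼q.}`.
There the only rule with head `p` is `p ← q`, whose body is false in `{p}`.
-/

section StrongEquivalence

variable {α : Type} {P Q : Set (Rule α)} {I J : Set α}

lemma progSat_reduct_iff_reProg : progSat I (reduct J P) ↔ reProg P I J := by
  constructor
  · exact fun h π hπ hk => h _ ⟨π, hπ, hk, rfl⟩
  · rintro h ρ ⟨π, hπ, hk, rfl⟩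
    exact h π hπ hk

lemma ruleSat_of_not_kept {π : Rule α} (h : ¬ kept J π) : ruleSat J π := by
  simp only [kept, not_and_or, not_forall] at h
  rcases h with ⟨a, hab, haJ⟩ | ⟨a, hah, haJ⟩
  · exact Or.inl ⟨Lit.neg a, hab, by simpa [litSat] using haJ⟩
  · exact Or.inr ⟨Lit.neg a, hah, haJ⟩

lemma ruleSat_of_ruleSat_reductRule {π : Rule α} (h : ruleSat J (reductRule π)) :
    ruleSat J π := by
  rcases h with ⟨L, ⟨hL, _⟩, hs⟩ | ⟨L, ⟨hL, _⟩, hs⟩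
  · exact Or.inl ⟨L, hL, hs⟩
  · exact Or.inr ⟨L, hL, hs⟩

lemma ruleSat_of_reRule_self {π : Rule α} (h : reRule π J J) : ruleSat J π := by
  by_cases hk : kept J π
  · exact ruleSat_of_ruleSat_reductRule (h hk)
  · exact ruleSat_of_not_kept hk

lemma htProg_self_iff_reProg : htProg P J J ↔ reProg P J J :=
  ⟨fun h π hπ => (h π hπ).2, fun h π hπ => ⟨ruleSat_of_reRule_self (h π hπ), h π hπ⟩⟩

lemma htProg_iff_reProg (hJ : reProg P J J) : htProg P I J ↔ reProg P I J :=
  ⟨fun h π hπ => (h π hπ).2, fun h π hπ => ⟨ruleSat_of_reRule_self (hJ π hπ), h π hπ⟩⟩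

lemma stableModel_iff_htProg :
    stableModel P J ↔ htProg P J J ∧ ∀ I, I ⊂ J → ¬ htProg P I J := by
  simp only [stableModel, progSat_reduct_iff_reProg, htProg_self_iff_reProg]
  refine and_congr_right fun hJ => ⟨fun h I hIJ hI => ?_, fun h I hI hIJ => ?_⟩
  · exact h I ((htProg_iff_reProg hJ).mp hI) hIJ
  · exact h I hIJ ((htProg_iff_reProg hJ).mpr hI)

lemma htEquiv.refl (P : Set (Rule α)) : htEquiv P P := fun _ _ _ => Iff.rfl

lemma htEquiv.stableModel_iff (h : htEquiv P Q) : stableModel P J ↔ stableModel Q J := by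
  simp only [stableModel_iff_htProg]
  refine and_congr (h J J subset_rfl) (forall_congr' fun I => imp_congr_right fun hIJ => ?_)
  rw [h I J hIJ.subset]

end StrongEquivalence

section Facts

variable {α : Type}

lemma fact_injective : Function.Injective (fact : Lit α → Rule α) := by
  intro L L' h
  simpa [fact] using congrArg Rule.head h

lemma isFactProg_pair (L L' : Lit α) : isFactProg {fact L, fact L'} := by
  rintro π (rfl | rfl) <;> exact ⟨_, rfl⟩

lemma isFactProg_singleton (L : Lit α) : isFactProg {fact L} := by
  rintro π rfl
  exact ⟨L, rfl⟩

lemma consistentFacts_pair_pos (a b : α) :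
    consistentFacts {fact (Lit.pos a), fact (Lit.pos b)} := by
  rintro ⟨c, -, hc | hc⟩ <;> cases fact_injective hc

lemma consistentFacts_singleton (L : Lit α) : consistentFacts {fact L} := by
  rintro ⟨c, hpos, hneg⟩
  cases fact_injective (hpos.trans hneg.symm)

lemma htRule_fact_pos_iff {a : α} {I J : Set α} (hIJ : I ⊆ J) :
    htRule (fact (Lit.pos a)) I J ↔ a ∈ I := by
  simp only [htRule, ruleSat, reRule, kept, reductRule, fact, litSat]
  aesop

end Facts

section Example

variable {α : Type} (p q : α)

def posRule (a b : α) : Rule α := ⟨{Lit.pos a}, {Lit.pos b}⟩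

lemma htRule_posRule_iff {a b : α} {I J : Set α} :
    htRule (posRule a b) I J ↔ (b ∈ J → a ∈ J) ∧ (b ∈ I → a ∈ I) := by
  simp only [htRule, ruleSat, reRule, kept, reductRule, posRule, litSat, imp_iff_not_or]
  aesop

lemma htEquiv_facts_posRule :
    htEquiv {fact (Lit.pos p), fact (Lit.pos q)} {posRule p q, fact (Lit.pos q)} := by
  intro I J hIJ
  simp only [htProg, Set.forall_mem_insert, Set.mem_singleton_iff, forall_eq,
    htRule_fact_pos_iff hIJ, htRule_posRule_iff]
  exact ⟨fun ⟨hp, hq⟩ => ⟨⟨fun _ => hIJ hp, fun _ => hp⟩, hq⟩,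
    fun ⟨⟨_, hqp⟩, hq⟩ => ⟨hqp hq, hq⟩⟩

lemma stableModel_of_respectsFactUpdate {op : Set (Rule α) → Set (Rule α) → Set (Rule α)}
    (hpq : p ≠ q) (hfu : respectsFactUpdate op) :
    stableModel (op {fact (Lit.pos p), fact (Lit.pos q)} {fact (Lit.neg q)}) {p} := by
  rw [hfu _ _ (isFactProg_pair _ _) (isFactProg_singleton _) (consistentFacts_pair_pos p q)
    (consistentFacts_singleton _)]
  ext a
  simp only [Set.mem_singleton_iff, Set.mem_ofPred_eq, Set.mem_insert_iff,
    fact_injective.eq_iff, reduceCtorEq, Lit.pos.injEq, Lit.neg.injEq, false_or]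
  constructor
  · rintro rfl
    exact ⟨Or.inl rfl, hpq⟩
  · rintro ⟨rfl | rfl, hne⟩
    · rfl
    · exact absurd rfl hne

lemma not_supported_in_singleton (hpq : p ≠ q) :
    ¬ ∃ π ∈ ({posRule p q, fact (Lit.pos q)} ∪ {fact (Lit.neg q)} : Set (Rule α)),
      Lit.pos p ∈ π.head ∧ bodySat {p} π := by
  rintro ⟨π, (rfl | rfl) | rfl, hhead, hbody⟩
  · exact hpq (hbody (Lit.pos q) rfl).symm
  · exact hpq (Lit.pos.inj hhead)
  · cases hhead

end Example

/-- Any rule update operator satisfying PU4 cannot respect both support and fact update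
(witnessed by `P = {p., q.}`, `Q = {p ← q., q.}`, `U = {∼q.}`). -/
theorem stmt10 {α : Type} (p q : α) (hpq : p ≠ q)
    (op : Set (Rule α) → Set (Rule α) → Set (Rule α))
    (hPU4 : satisfiesPU4 op) :
    ¬ (respectsSupport op ∧ respectsFactUpdate op) := by
  rintro ⟨hsup, hfu⟩
  have hstable : stableModel (op {posRule p q, fact (Lit.pos q)} {fact (Lit.neg q)}) {p} :=
    (hPU4 _ _ _ _ (htEquiv_facts_posRule p q) (htEquiv.refl _)).stableModel_iff.mp
      (stableModel_of_respectsFactUpdate p q hpq hfu)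
  exact not_supported_in_singleton p q hpq (hsup _ _ _ hstable p rfl)
end

section
/- For the DLP ⟨{p., q ← p.}, {∼p ← ∼q.}⟩, the set of JU-models is exactly { ∅, {p, q} }; in particular JU-models need not be subset-minimal among themselves. -/
/-- JU-rejected rules for a DLP of length two `⟨P₀, P₁⟩`. -/
def rejJU2 {α : Type} (P₀ P₁ : Set (Rule α)) (J : Set α) : Set (Rule α) :=
  {π | π ∈ P₀ ∧ ∃ σ ∈ P₁, conflict π σ ∧ bodySat J σ}

/-- JU-models of a DLP of length two. -/
def JUmodel2 {α : Type} (P₀ P₁ : Set (Rule α)) (J : Set α) : Prop :=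
  stableModel ((P₀ ∪ P₁) \ rejJU2 P₀ P₁ J) J

section

variable {α : Type}

lemma progSat_reduct_iff (I J : Set α) (P : Set (Rule α)) :
    progSat I (reduct J P) ↔ ∀ π ∈ P, kept J π → ruleSat I (reductRule π) := by
  constructor
  · intro h π hπ hk
    exact h _ ⟨π, hπ, hk, rfl⟩
  · rintro h ρ ⟨π, hπ, hk, rfl⟩
    exact h π hπ hk

lemma mem_rejJU2_singleton_iff (P₀ : Set (Rule α)) (σ π : Rule α) (J : Set α) :
    π ∈ rejJU2 P₀ {σ} J ↔ π ∈ P₀ ∧ conflict π σ ∧ bodySat J σ := by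
  simp only [rejJU2, Set.mem_ofPred_eq, Set.mem_singleton_iff, exists_eq_left]

lemma conflict_pos_neg_iff (a b : α) (B B' : Set (Lit α)) :
    conflict ⟨{Lit.pos a}, B⟩ ⟨{Lit.neg b}, B'⟩ ↔ a = b := by
  simp [conflict, negLit]

lemma bodySat_singleton_iff (J : Set α) (H : Set (Lit α)) (L : Lit α) :
    bodySat J ⟨H, {L}⟩ ↔ litSat J L := by
  simp [bodySat]

lemma mk_neg_ne_mk_pos (a b : α) (B B' : Set (Lit α)) :
    (⟨{Lit.neg a}, B⟩ : Rule α) ≠ ⟨{Lit.pos b}, B'⟩ := by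
  simp

lemma kept_fact (J : Set α) (a : α) : kept J ⟨{Lit.pos a}, ∅⟩ := by
  simp [kept]

lemma kept_pos (J : Set α) (a b : α) : kept J ⟨{Lit.pos a}, {Lit.pos b}⟩ := by
  simp [kept]

lemma kept_neg_iff (J : Set α) (a b : α) :
    kept J ⟨{Lit.neg a}, {Lit.neg b}⟩ ↔ b ∉ J ∧ a ∈ J := by
  simp [kept]

lemma ruleSat_reductRule_fact (I : Set α) (a : α) :
    ruleSat I (reductRule ⟨{Lit.pos a}, ∅⟩) ↔ a ∈ I := by
  simp [ruleSat, reductRule, litSat]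

lemma ruleSat_reductRule_pos (I : Set α) (a b : α) :
    ruleSat I (reductRule ⟨{Lit.pos a}, {Lit.pos b}⟩) ↔ (b ∈ I → a ∈ I) := by
  simp [ruleSat, reductRule, litSat, imp_iff_not_or]

lemma not_ruleSat_reductRule_neg (I : Set α) (a b : α) :
    ¬ ruleSat I (reductRule ⟨{Lit.neg a}, {Lit.neg b}⟩) := by
  simp [ruleSat, reductRule, litSat]

lemma progSat_reduct_pruned_iff (p q : α) (I J : Set α) :
    progSat I (reduct J
      (({⟨{Lit.pos p}, ∅⟩, ⟨{Lit.pos q}, {Lit.pos p}⟩} ∪ {⟨{Lit.neg p}, {Lit.neg q}⟩}) \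
        rejJU2 {⟨{Lit.pos p}, ∅⟩, ⟨{Lit.pos q}, {Lit.pos p}⟩} {⟨{Lit.neg p}, {Lit.neg q}⟩} J))
      ↔ (q ∈ J → p ∈ I) ∧ (p ∈ I → q ∈ I) ∧ (p ∈ J → q ∈ J) := by
  simp only [progSat_reduct_iff, Set.mem_sdiff, Set.mem_union, Set.mem_insert_iff,
    Set.mem_singleton_iff, and_imp, or_imp, forall_and, forall_eq, mem_rejJU2_singleton_iff]
  simp only [conflict_pos_neg_iff, bodySat_singleton_iff, litSat, kept_fact, kept_pos,
    kept_neg_iff, mk_neg_ne_mk_pos, ruleSat_reductRule_fact, ruleSat_reductRule_pos,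
    not_ruleSat_reductRule_neg, true_or, or_true, or_self, false_and, true_and, not_false_eq_true]
  rcases eq_or_ne q p with rfl | _ <;> tauto

end

theorem stmt15_general {α : Type} (p q : α) :
    {J : Set α | JUmodel2 {⟨{Lit.pos p}, ∅⟩, ⟨{Lit.pos q}, {Lit.pos p}⟩}
                          {⟨{Lit.neg p}, {Lit.neg q}⟩} J}
      = {∅, {p, q}} := by
  ext J
  simp only [Set.mem_ofPred_eq, Set.mem_insert_iff, Set.mem_singleton_iff, JUmodel2, stableModel,
    progSat_reduct_pruned_iff]
  constructor
  · rintro ⟨⟨hqp, hpq, -⟩, hmin⟩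
    by_cases hq : q ∈ J
    · have hsub : {p, q} ⊆ J := Set.pair_subset (hqp hq) hq
      refine Or.inr (hsub.eq_of_not_ssubset (hmin _ ⟨?_, ?_, hpq⟩)).symm <;> simp
    · refine Or.inl (Set.not_nonempty_iff_eq_empty.1 fun hne => ?_)
      exact hmin ∅ ⟨hq.elim, (Set.notMem_empty p).elim, hpq⟩ (Set.empty_ssubset.2 hne)
  · rintro (rfl | rfl)
    · exact ⟨by simp, fun I _ hI => hI.2 (Set.empty_subset I)⟩
    · refine ⟨by simp, fun I hI hss => hss.2 ?_⟩
      have hp : p ∈ I := hI.1 (by simp)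
      exact Set.pair_subset hp (hI.2.1 hp)

/-- The JU-models of the DLP `⟨{p., q ← p.}, {∼p ← ∼q.}⟩` are exactly `∅` and `{p, q}`;
in particular JU-models need not be subset-minimal among themselves. -/
theorem stmt15 {α : Type} (p q : α) (hpq : p ≠ q) :
    {J : Set α | JUmodel2 {⟨{Lit.pos p}, ∅⟩, ⟨{Lit.pos q}, {Lit.pos p}⟩}
                          {⟨{Lit.neg p}, {Lit.neg q}⟩} J}
      = {∅, {p, q}} :=
  stmt15_general p q
end
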